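/- Let (A,B) be a pair of d×d complex matrices with equal diagonals where A has nonnegative entries, B is hermitian, and A_{ij}A_{ji} ≥ |B_{ij}|² for all i,j. Then (A,B) is pairwise completely positive with factor width 2 if and only if B has factor width 2 (as a positive semidefinite matrix). -/

import Mathlib

open Matrix Finset
open scoped ComplexOrder

/-!
The forward direction only forgets `A`. Conversely, write `B = ∑ₘ uₘ uₘᴴ` with every `uₘ`
supported on at most two coordinates, and let `p i j` be the mass `∑ ‖uₘ i‖²` over those `uₘ`
that also live on `j`. Cauchy–Schwarz gives `‖B i j‖² ≤ p i j * p j i`, and two-point supports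
give `∑_{j ≠ i} p i j ≤ B i i`. For `i < j`, one PCP term whose `v ⊙ w` is supported on `{i, j}`
produces the rank-one block `[[p, b], [b̄, ‖b‖² / p]]` of `B` (with `b = B i j`) while consuming
exactly `A i j` and at most `A j i`, by `‖b‖² ≤ A i j * A j i`. What is left over (diagonal slack
shared by `A` and `B`, off-diagonal slack of `A`) is entrywise nonnegative, and such a pair is a sum
of PCP terms with one-point supports.
-/

variable {ι κ : Type*}

theorem Complex.ofReal_sqrt_mul_self {r : ℝ} (hr : 0 ≤ r) : (√r : ℂ) * √r = r := by
  rw [← Complex.ofReal_mul, Real.mul_self_sqrt hr]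

theorem eq_zero_of_norm_sq_le_mul {b : ℂ} {s t : ℝ} (h : ‖b‖ ^ 2 ≤ s * t) (hs : s = 0) : b = 0 := by
  rw [hs, zero_mul] at h
  simpa using le_antisymm h (sq_nonneg _)

section TwoPointVectors

variable [DecidableEq ι]

theorem single_add_single_mul_single_add_single {i j : ι} (hij : i ≠ j) (a b c d : ℂ) :
    (Pi.single i a + Pi.single j b : ι → ℂ) * (Pi.single i c + Pi.single j d) =
      (Pi.single i (a * c) + Pi.single j (b * d) : ι → ℂ) := by
  ext x
  by_cases hx : x = i <;> by_cases hy : x = j <;> simp_all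

theorem vecMulVec_single_single (i j : ι) (a b : ℂ) :
    vecMulVec (Pi.single i a) (Pi.single j b) = single i j (a * b) := by
  ext x y
  simp only [vecMulVec_apply, single_apply, Pi.single_apply, ite_and, eq_comm]
  split_ifs <;> simp

theorem vecMulVec_single_add_single (i j : ι) (a b c d : ℂ) :
    vecMulVec (Pi.single i a + Pi.single j b : ι → ℂ) (Pi.single i c + Pi.single j d) =
      single i i (a * c) + single i j (a * d) + single j i (b * c) + single j j (b * d) := by
  simp only [add_vecMulVec, vecMulVec_add, vecMulVec_single_single]
  abel

variable [Fintype ι]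

theorem card_filter_le_two {P : ι → Prop} [DecidablePred P] {i j : ι}
    (h : ∀ x, P x → x = i ∨ x = j) : #{x | P x} ≤ 2 :=
  (card_le_card fun x hx => by simpa using h x (mem_filter.1 hx).2).trans card_le_two

theorem sum_sum_single_add_single (f g h k : ι → ι → ℂ) :
    ∑ i, ∑ j, (single i i (f i j) + single i j (g i j) + single j i (h i j) + single j j (k i j)) =
      diagonal (fun i => ∑ j, f i j) + of g + (of h)ᵀ + diagonal (fun j => ∑ i, k i j) := by
  ext x y
  simp [Matrix.sum_apply, single_apply, diagonal_apply, ite_and, sum_add_distrib]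

end TwoPointVectors

section PCP

variable [Fintype ι]

def IsPCPFactorWidthTwo (A B : Matrix ι ι ℂ) : Prop :=
  ∃ (N : ℕ) (v w : Fin N → ι → ℂ),
    (∀ n, #{i | v n i * w n i ≠ 0} ≤ 2) ∧
    A = ∑ n, vecMulVec (v n * star (v n)) (star (w n * star (w n))) ∧
    B = ∑ n, vecMulVec (v n * w n) (star (v n * w n))

theorem isPCPFactorWidthTwo_rankOne (v w : ι → ℂ) (hvw : #{i | v i * w i ≠ 0} ≤ 2) :
    IsPCPFactorWidthTwo (vecMulVec (v * star v) (star (w * star w)))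
      (vecMulVec (v * w) (star (v * w))) :=
  ⟨1, fun _ => v, fun _ => w, fun _ => hvw, by simp, by simp⟩

namespace IsPCPFactorWidthTwo

theorem zero : IsPCPFactorWidthTwo (0 : Matrix ι ι ℂ) 0 :=
  ⟨0, Fin.elim0, Fin.elim0, Fin.rec0, by simp, by simp⟩

theorem add {A B A' B' : Matrix ι ι ℂ} (h : IsPCPFactorWidthTwo A B)
    (h' : IsPCPFactorWidthTwo A' B') : IsPCPFactorWidthTwo (A + A') (B + B') := by
  obtain ⟨N, v, w, hvw, rfl, rfl⟩ := h
  obtain ⟨N', v', w', hvw', rfl, rfl⟩ := h'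
  refine ⟨N + N', Fin.append v v', Fin.append w w', Fin.addCases ?_ ?_, ?_, ?_⟩ <;>
    simp only [Fin.append_left, Fin.append_right, Fin.sum_univ_add]
  exacts [hvw, hvw']

theorem sum (s : Finset κ) {A B : κ → Matrix ι ι ℂ}
    (h : ∀ k ∈ s, IsPCPFactorWidthTwo (A k) (B k)) :
    IsPCPFactorWidthTwo (∑ k ∈ s, A k) (∑ k ∈ s, B k) := by
  classical
  induction s using Finset.induction_on with
  | empty => simpa using zero
  | insert k s hk ih =>
    rw [sum_insert hk, sum_insert hk]
    exact (h k (mem_insert_self k s)).add (ih fun k' hk' => h k' (mem_insert_of_mem hk'))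

end IsPCPFactorWidthTwo

variable [DecidableEq ι]

theorem isPCPFactorWidthTwo_single (i j : ι) {r : ℝ} (hr : 0 ≤ r) :
    IsPCPFactorWidthTwo (single i j (r : ℂ)) (if i = j then single i j (r : ℂ) else 0) := by
  have key := isPCPFactorWidthTwo_rankOne (Pi.single i (√r : ℂ)) (Pi.single j 1)
    (card_filter_le_two (i := i) (j := i) fun x hx => by by_contra! h; simp [h.1] at hx)
  simp only [Pi.star_single, ← Pi.single_mul, vecMulVec_single_single, Complex.star_def,
    Complex.conj_ofReal, map_one, mul_one, Complex.ofReal_sqrt_mul_self hr] at key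
  split_ifs with hij
  · subst hij
    simpa [← Pi.single_mul, vecMulVec_single_single, Complex.ofReal_sqrt_mul_self hr] using key
  · have hvw : (Pi.single i (√r : ℂ) * Pi.single j 1 : ι → ℂ) = 0 := by
      ext x
      by_cases hx : x = i <;> simp_all
    simpa [hvw] using key

theorem isPCPFactorWidthTwo_of_nonneg {N : Matrix ι ι ℂ} (hN : ∀ i j, 0 ≤ N i j) :
    IsPCPFactorWidthTwo N (diagonal fun i => N i i) := by
  have hre : ∀ i j, N i j = ((N i j).re : ℂ) := fun i j => Complex.eq_re_of_ofReal_le (hN i j)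
  have hdiag : diagonal (fun i => N i i) = ∑ i, ∑ j, if i = j then single i j (N i j) else 0 := by
    simp [sum_single_eq_diagonal]
  have h := IsPCPFactorWidthTwo.sum univ fun i _ => IsPCPFactorWidthTwo.sum univ fun j _ =>
    isPCPFactorWidthTwo_single i j (Complex.nonneg_iff.1 (hN i j)).1
  simp_rw [← hre] at h
  rwa [← matrix_eq_sum_single, ← hdiag] at h

theorem IsPCPFactorWidthTwo.of_sub {A B A₀ B₀ : Matrix ι ι ℂ} (h₀ : IsPCPFactorWidthTwo A₀ B₀)
    (hA : ∀ i j, 0 ≤ (A - A₀) i j) (hB : B = B₀ + diagonal fun i => (A - A₀) i i) :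
    IsPCPFactorWidthTwo A B := by
  simpa [hB] using h₀.add (isPCPFactorWidthTwo_of_nonneg hA)

theorem isPCPFactorWidthTwo_block_of_pos {i j : ι} (hij : i ≠ j) {p a : ℝ} {b : ℂ} (hp : 0 < p)
    (ha : 0 < a) :
    IsPCPFactorWidthTwo
      (single i i (p : ℂ) + single i j (a : ℂ) + single j i ((‖b‖ ^ 2 / a : ℝ) : ℂ) +
        single j j ((‖b‖ ^ 2 / p : ℝ) : ℂ))
      (single i i (p : ℂ) + single i j b + single j i (star b) +
        single j j ((‖b‖ ^ 2 / p : ℝ) : ℂ)) := by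
  -- `v ⊙ w = (√p, b̄ / √p)` on `{i, j}`, `v ⊙ v̄ = (a, ‖b‖² / p)` and `w ⊙ w̄ = (p / a, 1)`.
  have key := isPCPFactorWidthTwo_rankOne
    (Pi.single i (√a : ℂ) + Pi.single j (star b / √p) : ι → ℂ)
    (Pi.single i (√(p / a) : ℂ) + Pi.single j 1 : ι → ℂ)
    (card_filter_le_two (i := i) (j := j) fun x hx => by
      by_contra! h; simp [h.1, h.2] at hx)
  simp only [single_add_single_mul_single_add_single hij, star_add, Pi.star_single,
    vecMulVec_single_add_single, Complex.star_def, map_mul, map_div₀, Complex.conj_ofReal,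
    Complex.conj_conj, map_one, mul_one] at key
  have hsqrt_p : (√p : ℂ) ≠ 0 := by exact_mod_cast (Real.sqrt_pos.2 hp).ne'
  have hsqrt : (√a : ℂ) * √(p / a) = √p := by
    rw [← Complex.ofReal_mul, ← Real.sqrt_mul ha.le, mul_div_cancel₀ _ ha.ne']
  have hbb : starRingEnd ℂ b / √p * (b / √p) = ((‖b‖ ^ 2 / p : ℝ) : ℂ) := by
    rw [div_mul_div_comm, Complex.ofReal_sqrt_mul_self hp.le, Complex.conj_mul']
    push_cast
    ring
  rw [Complex.ofReal_sqrt_mul_self ha.le, Complex.ofReal_sqrt_mul_self (div_nonneg hp.le ha.le),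
    hsqrt, Complex.ofReal_sqrt_mul_self hp.le, hbb, mul_div_cancel₀ _ hsqrt_p,
    div_mul_cancel₀ _ hsqrt_p, ← Complex.ofReal_mul, ← Complex.ofReal_mul,
    mul_div_cancel₀ _ ha.ne', div_mul_div_cancel₀ hp.ne'] at key
  exact key

theorem isPCPFactorWidthTwo_block {i j : ι} (hij : i ≠ j) {p a : ℝ} {b : ℂ} (hp : 0 ≤ p)
    (ha : 0 ≤ a) (hpb : p = 0 → b = 0) (hab : a = 0 → b = 0) :
    IsPCPFactorWidthTwo
      (single i i (p : ℂ) + single i j (a : ℂ) + single j i ((‖b‖ ^ 2 / a : ℝ) : ℂ) +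
        single j j ((‖b‖ ^ 2 / p : ℝ) : ℂ))
      (single i i (p : ℂ) + single i j b + single j i (star b) +
        single j j ((‖b‖ ^ 2 / p : ℝ) : ℂ)) := by
  rcases hp.eq_or_lt with rfl | hp
  · obtain rfl := hpb rfl
    simpa [hij] using isPCPFactorWidthTwo_single i j ha
  rcases ha.eq_or_lt with rfl | ha
  · obtain rfl := hab rfl
    simpa using isPCPFactorWidthTwo_single i i hp.le
  exact isPCPFactorWidthTwo_block_of_pos hij hp ha

end PCP

section UpperBlocks

variable [Fintype ι] [LinearOrder ι]

/-- The diagonal of `∑_{i < j}` of the blocks of `isPCPFactorWidthTwo_block` with data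
`(p i j, a i j, b i j)`: the pair `(i, j)` contributes `p i j` at `i` and `‖b i j‖² / p i j` at `j`. -/
noncomputable def upperBlockDiag (p : ι → ι → ℝ) (b : ι → ι → ℂ) (i : ι) : ℝ :=
  (∑ j, if i < j then p i j else 0) + ∑ j, if j < i then ‖b j i‖ ^ 2 / p j i else 0

theorem upperBlockDiag_le {p : ι → ι → ℝ} {b : ι → ι → ℂ} (hp : ∀ i j, 0 ≤ p i j)
    (hpb : ∀ i j, ‖b i j‖ ^ 2 ≤ p i j * p j i) (i : ι) :
    upperBlockDiag p b i ≤ ∑ j ∈ univ.erase i, p i j := by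
  rw [upperBlockDiag, ← sum_add_distrib, ← sum_erase univ (a := i) (by simp)]
  refine sum_le_sum fun j hj => ?_
  rcases lt_or_gt_of_ne (ne_of_mem_erase hj) with h | h
  · simpa [h, not_lt_of_gt h] using
      div_le_of_le_mul₀ (hp j i) (hp i j) ((hpb j i).trans_eq (mul_comm _ _))
  · simp [h, not_lt_of_gt h]

theorem isPCPFactorWidthTwo_upperBlocks (p a : ι → ι → ℝ) (b : ι → ι → ℂ)
    (hp : ∀ i j, 0 ≤ p i j) (ha : ∀ i j, 0 ≤ a i j) (hpb : ∀ i j, p i j = 0 → b i j = 0)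
    (hab : ∀ i j, a i j = 0 → b i j = 0) :
    IsPCPFactorWidthTwo
      (diagonal (fun i => (upperBlockDiag p b i : ℂ)) + of fun i j =>
        ((if i < j then a i j else if j < i then ‖b j i‖ ^ 2 / a j i else 0 : ℝ) : ℂ))
      (diagonal (fun i => (upperBlockDiag p b i : ℂ)) + of fun i j =>
        if i < j then b i j else if j < i then star (b j i) else 0) := by
  have h := IsPCPFactorWidthTwo.sum univ fun i _ => IsPCPFactorWidthTwo.sum univ fun j _ =>
    show IsPCPFactorWidthTwo
      (single i i ((if i < j then p i j else 0 : ℝ) : ℂ) +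
        single i j ((if i < j then a i j else 0 : ℝ) : ℂ) +
        single j i ((if i < j then ‖b i j‖ ^ 2 / a i j else 0 : ℝ) : ℂ) +
        single j j ((if i < j then ‖b i j‖ ^ 2 / p i j else 0 : ℝ) : ℂ))
      (single i i ((if i < j then p i j else 0 : ℝ) : ℂ) +
        single i j (if i < j then b i j else 0) + single j i (if i < j then star (b i j) else 0) +
        single j j ((if i < j then ‖b i j‖ ^ 2 / p i j else 0 : ℝ) : ℂ)) by
    by_cases hij : i < j
    · simp only [hij, if_true]
      exact isPCPFactorWidthTwo_block hij.ne (hp i j) (ha i j) (hpb i j) (hab i j)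
    · simpa [hij] using IsPCPFactorWidthTwo.zero
  rw [sum_sum_single_add_single, sum_sum_single_add_single] at h
  convert h using 1 <;> ext x y <;> rcases lt_trichotomy x y with hxy | hxy | hxy <;>
    simp [upperBlockDiag, hxy, ne_of_lt, ne_of_gt, not_lt_of_gt]

theorem isPCPFactorWidthTwo_of_weights {A B : Matrix ι ι ℂ} (p : ι → ι → ℝ)
    (hdiag : ∀ i, A i i = B i i) (hA : ∀ i j, 0 ≤ A i j) (hB : B.IsHermitian)
    (hAB : ∀ i j, ‖B i j‖ ^ 2 ≤ (A i j).re * (A j i).re) (hp : ∀ i j, 0 ≤ p i j)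
    (hpB : ∀ i j, ‖B i j‖ ^ 2 ≤ p i j * p j i)
    (hpdiag : ∀ i, ∑ j ∈ univ.erase i, p i j ≤ (B i i).re) :
    IsPCPFactorWidthTwo A B := by
  have hAre : ∀ i j, 0 ≤ (A i j).re := fun i j => (Complex.nonneg_iff.1 (hA i j)).1
  have hre : ∀ i j, A i j = ((A i j).re : ℂ) := fun i j => Complex.eq_re_of_ofReal_le (hA i j)
  have hBre : ∀ i, B i i = ((B i i).re : ℂ) := fun i =>
    (Complex.conj_eq_iff_re.1 (hB.apply i i)).symm
  refine (isPCPFactorWidthTwo_upperBlocks p (fun i j => (A i j).re) B hp hAre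
    (fun i j => eq_zero_of_norm_sq_le_mul (hpB i j))
    (fun i j => eq_zero_of_norm_sq_le_mul (hAB i j))).of_sub (fun x y => ?_) (ext fun x y => ?_) <;>
    simp only [Matrix.sub_apply, Matrix.add_apply, diagonal_apply, of_apply] <;>
    rcases lt_trichotomy x y with h | rfl | h
  · simp [h, h.ne, ← hre]
  · simp only [if_true, lt_irrefl, if_false, hdiag x, Complex.ofReal_zero, add_zero]
    rw [hBre x, ← Complex.ofReal_sub, Complex.zero_le_real, sub_nonneg]
    exact (upperBlockDiag_le hp hpB x).trans (hpdiag x)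
  · simp only [h, h.ne', not_lt_of_gt h, if_true, if_false, zero_add]
    rw [hre x y, ← Complex.ofReal_sub, Complex.zero_le_real, sub_nonneg]
    exact div_le_of_le_mul₀ (hAre y x) (hAre x y) ((hAB y x).trans_eq (mul_comm _ _))
  · simp [h, h.ne]
  · simp [hdiag x]
  · simp [h, h.ne', not_lt_of_gt h, hB.apply]

end UpperBlocks

section PairMass

variable [Fintype κ]

noncomputable def pairMass (u : κ → ι → ℂ) (i j : ι) : ℝ :=
  ∑ m, if u m j = 0 then 0 else ‖u m i‖ ^ 2

theorem pairMass_nonneg (u : κ → ι → ℂ) (i j : ι) : 0 ≤ pairMass u i j :=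
  sum_nonneg fun m _ => by split_ifs <;> positivity

theorem sum_vecMulVec_star_apply (u : κ → ι → ℂ) (i j : ι) :
    (∑ m, vecMulVec (u m) (star (u m))) i j = ∑ m, u m i * star (u m j) := by
  simp [Matrix.sum_apply, vecMulVec_apply]

theorem norm_sq_sum_vecMulVec_star_apply_le (u : κ → ι → ℂ) (i j : ι) :
    ‖(∑ m, vecMulVec (u m) (star (u m))) i j‖ ^ 2 ≤ pairMass u i j * pairMass u j i := by
  have hnorm : ∀ m, ‖u m i * star (u m j)‖ =
      (if u m j = 0 then 0 else ‖u m i‖) * (if u m i = 0 then 0 else ‖u m j‖) := fun m => by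
    by_cases hi : u m i = 0 <;> by_cases hj : u m j = 0 <;> simp [hi, hj]
  calc ‖(∑ m, vecMulVec (u m) (star (u m))) i j‖ ^ 2
      ≤ (∑ m, ‖u m i * star (u m j)‖) ^ 2 := by
        rw [sum_vecMulVec_star_apply]
        exact pow_le_pow_left₀ (norm_nonneg _) (norm_sum_le _ _) 2
    _ ≤ (∑ m, (if u m j = 0 then 0 else ‖u m i‖) ^ 2) *
          ∑ m, (if u m i = 0 then 0 else ‖u m j‖) ^ 2 := by
        simp only [hnorm]
        exact sum_mul_sq_le_sq_mul_sq _ _ _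
    _ = pairMass u i j * pairMass u j i := by
        simp only [pairMass, ite_pow, zero_pow two_ne_zero]

variable [Fintype ι] [DecidableEq ι]

theorem card_filter_erase_ne_zero_le_one {v : ι → ℂ} (hv : #{i | v i ≠ 0} ≤ 2) {i : ι}
    (hi : v i ≠ 0) : #{j ∈ univ.erase i | v j ≠ 0} ≤ 1 := by
  rw [filter_erase, card_erase_of_mem (by simpa using hi)]
  omega

theorem sum_erase_pairMass_le {u : κ → ι → ℂ} (hu : ∀ m, #{i | u m i ≠ 0} ≤ 2) (i : ι) :
    ∑ j ∈ univ.erase i, pairMass u i j ≤ ((∑ m, vecMulVec (u m) (star (u m))) i i).re := by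
  simp only [sum_vecMulVec_star_apply, Complex.re_sum, pairMass]
  rw [sum_comm]
  refine sum_le_sum fun m _ => ?_
  rw [Complex.star_def, Complex.mul_conj', ← Complex.ofReal_pow, Complex.ofReal_re]
  by_cases hi : u m i = 0
  · simp [hi]
  rw [sum_ite, sum_const_zero, zero_add, sum_const, nsmul_eq_mul]
  exact mul_le_of_le_one_left (sq_nonneg _)
    (by exact_mod_cast card_filter_erase_ne_zero_le_one (hu m) hi)

end PairMass

theorem pcp_factor_width_two_iff_psd_factor_width_two_general {d : ℕ}
    (A B : Matrix (Fin d) (Fin d) ℂ) (hdiag : ∀ i, A i i = B i i)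
    (hA : ∀ i j, (A i j).im = 0 ∧ 0 ≤ (A i j).re)
    (hineq : ∀ i j, ‖B i j‖ ^ 2 ≤ (A i j).re * (A j i).re) :
    (∃ (N : ℕ) (v w : Fin N → Fin d → ℂ),
      (∀ n, (univ.filter (fun i => v n i * w n i ≠ 0)).card ≤ 2) ∧
      A = ∑ n, vecMulVec (fun i => v n i * star (v n i))
                (star fun j => w n j * star (w n j)) ∧
      B = ∑ n, vecMulVec (fun i => v n i * w n i)
                (star fun j => v n j * w n j))
    ↔ (∃ (M : ℕ) (u : Fin M → Fin d → ℂ),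
        (∀ m, (univ.filter (fun i => u m i ≠ 0)).card ≤ 2) ∧
        B = ∑ m, vecMulVec (u m) (star (u m))) := by
  constructor
  · rintro ⟨N, v, w, hvw, -, hB⟩
    exact ⟨N, fun n i => v n i * w n i, hvw, hB⟩
  · rintro ⟨M, u, hu, rfl⟩
    exact isPCPFactorWidthTwo_of_weights (pairMass u) hdiag
      (fun i j => Complex.nonneg_iff.2 ⟨(hA i j).2, (hA i j).1.symm⟩)
      (posSemidef_sum univ fun m _ => posSemidef_vecMulVec_self_star (u m)).isHermitian hineq
      (pairMass_nonneg u) (norm_sq_sum_vecMulVec_star_apply_le u) (sum_erase_pairMass_le hu)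

/-- Under the necessary PCP conditions (equal diagonals, `A` entrywise
nonnegative, `B` hermitian, `A_{ij}A_{ji} ≥ |B_{ij}|²`), the pair `(A,B)` is pairwise
completely positive with factor width 2 iff `B` has factor width 2. -/
theorem pcp_factor_width_two_iff_psd_factor_width_two {d : ℕ}
    (A B : Matrix (Fin d) (Fin d) ℂ) (hdiag : ∀ i, A i i = B i i)
    (hA : ∀ i j, (A i j).im = 0 ∧ 0 ≤ (A i j).re)
    (hherm : B.IsHermitian)
    (hineq : ∀ i j, ‖B i j‖ ^ 2 ≤ (A i j).re * (A j i).re) :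
    (∃ (N : ℕ) (v w : Fin N → Fin d → ℂ),
      (∀ n, (univ.filter (fun i => v n i * w n i ≠ 0)).card ≤ 2) ∧
      A = ∑ n, vecMulVec (fun i => v n i * star (v n i))
                (star fun j => w n j * star (w n j)) ∧
      B = ∑ n, vecMulVec (fun i => v n i * w n i)
                (star fun j => v n j * w n j))
    ↔ (∃ (M : ℕ) (u : Fin M → Fin d → ℂ),
        (∀ m, (univ.filter (fun i => u m i ≠ 0)).card ≤ 2) ∧
        B = ∑ m, vecMulVec (u m) (star (u m))) :=
  pcp_factor_width_two_iff_psd_factor_width_two_general A B hdiag hA hineq
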